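/- For real numbers a and b > 0 and R > 0, the integral identity (2/R²)·∫₀^R Q(a + b·ln(r/R))·r dr = Q(a) + exp((2 - 2ab)/b²)·Q((2 - ab)/b) holds, where Q(x) = (1/√(2π))·∫_x^∞ e^{-t²/2} dt is the Gaussian tail function. -/

import Mathlib

/-!
The substitution `r = R s` reduces the identity to `R = 1`. There, with `x = a + b log s` and
`K = (2 - 2ab)/b²`, the function `G(s) = (s² Q(x) + e^K Q(2/b - x)) / 2` is an antiderivative of
`s Q(x)` on `(0, 1]`: the two Gaussian-density terms of `G'` cancel because completing the square
gives `e^K φ(2/b - x) = s² φ(x)`. As `s → 0⁺`, `s² Q(x) → 0` since `0 ≤ Q ≤ 1`, and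
`Q(2/b - x) → 0` since `2/b - x → ∞`; so the integral is `2 G(1)`, the right-hand side.
-/

open MeasureTheory

/-- The Gaussian tail function `Q(x) = (1/√(2π)) ∫_x^∞ e^{-t²/2} dt`. -/
noncomputable def gaussQ (x : ℝ) : ℝ :=
  (1 / Real.sqrt (2 * Real.pi)) * ∫ t in Set.Ioi x, Real.exp (-t ^ 2 / 2)

open Real Set Filter Topology

lemma integrable_exp_neg_sq_div_two : Integrable fun t : ℝ => exp (-t ^ 2 / 2) := by
  convert integrable_exp_neg_mul_sq (b := 1 / 2) (by norm_num) using 2 with t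
  ring_nf

lemma integral_exp_neg_sq_div_two : ∫ t : ℝ, exp (-t ^ 2 / 2) = √(2 * π) := by
  convert integral_gaussian (1 / 2) using 2 with t <;> ring_nf

lemma gaussQ_nonneg (x : ℝ) : 0 ≤ gaussQ x :=
  mul_nonneg (by positivity) (setIntegral_nonneg measurableSet_Ioi fun t _ => (exp_pos _).le)

lemma gaussQ_le_one (x : ℝ) : gaussQ x ≤ 1 := by
  have hle : ∫ t in Ioi x, exp (-t ^ 2 / 2) ≤ √(2 * π) :=
    integral_exp_neg_sq_div_two ▸ setIntegral_le_integral integrable_exp_neg_sq_div_two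
      (Eventually.of_forall fun t => (exp_pos _).le)
  rwa [gaussQ, one_div_mul_eq_div, div_le_one (by positivity)]

lemma gaussQ_eq_sub_intervalIntegral (x : ℝ) :
    gaussQ x = gaussQ 0 - (1 / √(2 * π)) * ∫ t in (0 : ℝ)..x, exp (-t ^ 2 / 2) := by
  rw [gaussQ, gaussQ, ← mul_sub, ← intervalIntegral.integral_Ioi_sub_Ioi'
    integrable_exp_neg_sq_div_two.integrableOn integrable_exp_neg_sq_div_two.integrableOn,
    sub_sub_cancel]

lemma hasDerivAt_gaussQ (x : ℝ) :
    HasDerivAt gaussQ (-(1 / √(2 * π) * exp (-x ^ 2 / 2))) x := by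
  have hcont : Continuous fun t : ℝ => exp (-t ^ 2 / 2) := by fun_prop
  rw [funext gaussQ_eq_sub_intervalIntegral]
  exact ((intervalIntegral.integral_hasDerivAt_right
    integrable_exp_neg_sq_div_two.intervalIntegrable
    hcont.aestronglyMeasurable.stronglyMeasurableAtFilter hcont.continuousAt).const_mul _
    ).const_sub _ |>.congr_deriv (by ring)

lemma continuous_gaussQ : Continuous gaussQ :=
  continuous_iff_continuousAt.2 fun x => (hasDerivAt_gaussQ x).continuousAt

lemma tendsto_gaussQ_atTop : Tendsto gaussQ atTop (𝓝 0) := by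
  have h := (intervalIntegral_tendsto_integral_Ioi 0
    integrable_exp_neg_sq_div_two.integrableOn tendsto_id).const_mul (1 / √(2 * π))
  rw [← gaussQ] at h
  have h0 := (tendsto_const_nhds (x := gaussQ 0)).sub h
  rw [sub_self] at h0
  simpa only [id, ← gaussQ_eq_sub_intervalIntegral] using h0

lemma intervalIntegral_comp_div_mul_self (F : ℝ → ℝ) {R : ℝ} (hR : R ≠ 0) :
    ∫ r in (0 : ℝ)..R, F (r / R) * r = R ^ 2 * ∫ s in (0 : ℝ)..1, F s * s := by
  calc ∫ r in (0 : ℝ)..R, F (r / R) * r = ∫ r in (0 : ℝ)..R, R * (F (r / R) * (r / R)) := by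
        congr 1 with r; field_simp
    _ = R ^ 2 * ∫ s in (0 : ℝ)..1, F s * s := by
        rw [intervalIntegral.integral_const_mul,
          intervalIntegral.integral_comp_div (fun s => F s * s) hR, zero_div, div_self hR,
          smul_eq_mul]
        ring

noncomputable def gaussQLogAntideriv (a b s : ℝ) : ℝ :=
  (s ^ 2 * gaussQ (a + b * log s) +
    exp ((2 - 2 * a * b) / b ^ 2) * gaussQ (2 / b - a - b * log s)) / 2

section GaussQLog

variable (a : ℝ) {b : ℝ}

lemma exp_mul_exp_neg_sq_div_two_shift (hb : b ≠ 0) {s : ℝ} (hs : 0 < s) :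
    exp ((2 - 2 * a * b) / b ^ 2) * exp (-(2 / b - a - b * log s) ^ 2 / 2) =
      s ^ 2 * exp (-(a + b * log s) ^ 2 / 2) := by
  rw [← exp_log (pow_pos hs 2), log_pow, ← exp_add, ← exp_add]
  congr 1
  field_simp
  ring

lemma hasDerivAt_gaussQLogAntideriv (hb : b ≠ 0) {s : ℝ} (hs : 0 < s) :
    HasDerivAt (gaussQLogAntideriv a b) (gaussQ (a + b * log s) * s) s := by
  have hlog : HasDerivAt (fun s => b * log s) (b / s) s := by
    simpa [div_eq_mul_inv] using (hasDerivAt_log hs.ne').const_mul b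
  have hQ₁ := (hasDerivAt_gaussQ _).comp s (hlog.const_add a)
  have hQ₂ := (hasDerivAt_gaussQ _).comp s (hlog.const_sub (2 / b - a))
  refine ((((hasDerivAt_pow 2 s).mul hQ₁).add
    (hQ₂.const_mul (exp ((2 - 2 * a * b) / b ^ 2)))).div_const 2).congr_deriv ?_
  have hshift := exp_mul_exp_neg_sq_div_two_shift a hb hs
  simp only [Function.comp_apply]
  generalize exp ((2 - 2 * a * b) / b ^ 2) = E at hshift ⊢
  generalize exp (-(2 / b - a - b * log s) ^ 2 / 2) = E₁ at hshift ⊢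
  generalize exp (-(a + b * log s) ^ 2 / 2) = E₂ at hshift ⊢
  generalize 1 / √(2 * π) = c
  field_simp
  linear_combination b * c * hshift

lemma tendsto_gaussQLogAntideriv_zero (hb : 0 < b) :
    Tendsto (gaussQLogAntideriv a b) (𝓝[>] 0) (𝓝 0) := by
  have hsq : Tendsto (fun s : ℝ => s ^ 2) (𝓝[>] 0) (𝓝 0) := by
    simpa using ((continuous_pow 2).tendsto (0 : ℝ)).mono_left nhdsWithin_le_nhds
  have h₁ : Tendsto (fun s => s ^ 2 * gaussQ (a + b * log s)) (𝓝[>] 0) (𝓝 0) :=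
    squeeze_zero (fun s => mul_nonneg (sq_nonneg s) (gaussQ_nonneg _))
      (fun s => mul_le_of_le_one_right (sq_nonneg s) (gaussQ_le_one _)) hsq
  have harg : Tendsto (fun s => 2 / b - a - b * log s) (𝓝[>] 0) atTop :=
    tendsto_atTop_add_const_left _ _ (tendsto_neg_atBot_atTop.comp
      (tendsto_log_nhdsGT_zero.const_mul_atBot hb))
  unfold gaussQLogAntideriv
  simpa using (h₁.add ((tendsto_gaussQ_atTop.comp harg).const_mul _)).div_const 2

lemma intervalIntegrable_gaussQ_comp_log_mul_self :
    IntervalIntegrable (fun s => gaussQ (a + b * log s) * s) volume 0 1 := by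
  refine intervalIntegral.intervalIntegrable_id.mono_fun
    ((continuous_gaussQ.measurable.comp (by fun_prop)).mul measurable_id).aestronglyMeasurable
    (Eventually.of_forall fun s => ?_)
  dsimp only
  rw [norm_mul, Real.norm_of_nonneg (gaussQ_nonneg _)]
  exact mul_le_of_le_one_left (norm_nonneg s) (gaussQ_le_one _)

theorem two_mul_intervalIntegral_gaussQ_comp_log_mul_self (hb : 0 < b) :
    2 * ∫ s in (0 : ℝ)..1, gaussQ (a + b * log s) * s =
      gaussQ a + exp ((2 - 2 * a * b) / b ^ 2) * gaussQ ((2 - a * b) / b) := by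
  rw [intervalIntegral.integral_eq_sub_of_hasDerivAt_of_tendsto one_pos
    (fun s hs => hasDerivAt_gaussQLogAntideriv a hb.ne' hs.1)
    (intervalIntegrable_gaussQ_comp_log_mul_self a)
    (tendsto_gaussQLogAntideriv_zero a hb)
    ((hasDerivAt_gaussQLogAntideriv a hb.ne' one_pos).continuousAt.tendsto.mono_left
      nhdsWithin_le_nhds)]
  rw [gaussQLogAntideriv, log_one, mul_zero, add_zero, sub_zero, sub_zero,
    show 2 / b - a = (2 - a * b) / b by rw [sub_div, mul_div_cancel_right₀ _ hb.ne']]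
  ring

end GaussQLog

/-- The disk-averaged coverage integral identity:
`(2/R²) ∫₀^R Q(a + b ln(r/R)) r dr = Q(a) + exp((2-2ab)/b²) Q((2-ab)/b)`. -/
theorem stmt_4 (a b R : ℝ) (hb : 0 < b) (hR : 0 < R) :
    (2 / R ^ 2) * ∫ r in (0 : ℝ)..R, gaussQ (a + b * Real.log (r / R)) * r =
      gaussQ a + Real.exp ((2 - 2 * a * b) / b ^ 2) * gaussQ ((2 - a * b) / b) := by
  rw [intervalIntegral_comp_div_mul_self (fun s => gaussQ (a + b * log s)) hR.ne',
    ← two_mul_intervalIntegral_gaussQ_comp_log_mul_self a hb]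
  field_simp
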